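/- Let d ≥ 1 and let ρ be a symmetric probability measure on ℝ^d satisfying condition (*) and with positive definite covariance matrix Σ. Then liminf_{n→∞} (1/n) ln Z_n ≥ 0, where Z_n = ∫_{D_n^+} exp((1/2)⟨(∑_{i=1}^n x_i ᵗx_i)^{-1}(∑_{i=1}^n x_i), ∑_{i=1}^n x_i⟩) ∏_{i=1}^n dρ(x_i). -/

import Mathlib

open MeasureTheory Filter Matrix Real

noncomputable section

/-- `T_n(x) = ∑ i, x_i ᵗx_i`. -/
def Tmat (d n : ℕ) (x : Fin n → Fin d → ℝ) : Matrix (Fin d) (Fin d) ℝ :=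
  ∑ i, Matrix.vecMulVec (x i) (x i)

/-- `S_n(x) = x_1 + … + x_n`. -/
def Svec (d n : ℕ) (x : Fin n → Fin d → ℝ) : Fin d → ℝ := ∑ i, x i

/-- the Hamiltonian `(1/2)⟨T_n⁻¹ S_n, S_n⟩`. -/
def Hfun (d n : ℕ) (x : Fin n → Fin d → ℝ) : ℝ :=
  (1 / 2) * dotProduct ((Tmat d n x)⁻¹.mulVec (Svec d n x)) (Svec d n x)

/-- normalization constant `Z_n`. -/
def Zconst (d : ℕ) (ρ : Measure (Fin d → ℝ)) (n : ℕ) : ℝ :=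
  ∫ x : Fin n → Fin d → ℝ,
    Set.indicator {x | 0 < (Tmat d n x).det} (fun x => Real.exp (Hfun d n x)) x
    ∂ Measure.pi fun _ => ρ

/-- the Curie-Weiss model of SOC `μ̃_{n,ρ}`. -/
def CW (d : ℕ) (ρ : Measure (Fin d → ℝ)) (n : ℕ) : Measure (Fin n → Fin d → ℝ) :=
  (Measure.pi fun _ => ρ).withDensity fun x =>
    Set.indicator {x | 0 < (Tmat d n x).det}
      (fun x => ENNReal.ofReal (Real.exp (Hfun d n x) / Zconst d ρ n)) x

/-- covariance matrix `Σ = ∫ z ᵗz dρ(z)`. -/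
def covM (d : ℕ) (ρ : Measure (Fin d → ℝ)) : Matrix (Fin d) (Fin d) ℝ :=
  Matrix.of fun i j => ∫ z, z i * z j ∂ρ

/-- `M₄(z) = ∑ (∫ yᵢyⱼyₖyₗ dρ) zᵢzⱼzₖzₗ`. -/
def M4 (d : ℕ) (ρ : Measure (Fin d → ℝ)) (z : Fin d → ℝ) : ℝ :=
  ∑ i : Fin d, ∑ j : Fin d, ∑ k : Fin d, ∑ l : Fin d,
    (∫ y, y i * y j * y k * y l ∂ρ) * (z i * z j * z k * z l)

/-- symmetric measure: invariant under `z ↦ -z`. -/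
def SymMeas (d : ℕ) (ρ : Measure (Fin d → ℝ)) : Prop := ρ.map (fun z => -z) = ρ

/-- condition `(*)` : some Gaussian exponential moment. -/
def CondStar (d : ℕ) (ρ : Measure (Fin d → ℝ)) : Prop :=
  ∃ v₀ > (0:ℝ), Integrable (fun z => Real.exp (v₀ * dotProduct z z)) ρ

/-- the ρ-measure of every vector hyperplane is `< 1/√e`. -/
def HypLt (d : ℕ) (ρ : Measure (Fin d → ℝ)) : Prop :=
  ∀ s : Fin d → ℝ, s ≠ 0 →
    ρ {z | dotProduct s z = 0} < ENNReal.ofReal (1 / Real.sqrt (Real.exp 1))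

/-- non-degeneracy: the ρ-measure of every affine hyperplane is `< 1`. -/
def NonDeg (d : ℕ) (ρ : Measure (Fin d → ℝ)) : Prop :=
  ∀ s : Fin d → ℝ, s ≠ 0 → ∀ c : ℝ, ρ {z | dotProduct s z = c} < 1

-- positive square root of a positive semi-definite matrix (junk value otherwise).
open scoped Classical in
def psqrt (d : ℕ) (M : Matrix (Fin d) (Fin d) ℝ) : Matrix (Fin d) (Fin d) ℝ :=
  if h : M.PosSemidef then h.1.eigenvectorUnitary *
    diagonal ((RCLike.ofReal : ℝ → ℝ) ∘ Real.sqrt ∘ h.1.eigenvalues) *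
    (star h.1.eigenvectorUnitary : Matrix (Fin d) (Fin d) ℝ) else 0

/-- Euclidean norm on `ℝ^d`. -/
def vnorm (d : ℕ) (v : Fin d → ℝ) : ℝ := Real.sqrt (dotProduct v v)

/-- Frobenius norm on `d × d` matrices. -/
def mnorm (d : ℕ) (M : Matrix (Fin d) (Fin d) ℝ) : ℝ :=
  Real.sqrt (∑ i : Fin d, ∑ j : Fin d, (M i j) ^ 2)

/-- the log-Laplace transform `Λ` of `(Z, Z ᵗZ)`, with values in `(-∞, +∞]`. -/
def Lam (d : ℕ) (ρ : Measure (Fin d → ℝ)) (u : Fin d → ℝ)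
    (A : Matrix (Fin d) (Fin d) ℝ) : EReal :=
  ENNReal.log (∫⁻ z, ENNReal.ofReal
    (Real.exp (dotProduct u z + dotProduct (A.mulVec z) z)) ∂ρ)

/-- the Cramér transform `I` of `(Z, Z ᵗZ)`. -/
def CramerI (d : ℕ) (ρ : Measure (Fin d → ℝ)) (x : Fin d → ℝ)
    (M : Matrix (Fin d) (Fin d) ℝ) : EReal :=
  ⨆ p : (Fin d → ℝ) × {A : Matrix (Fin d) (Fin d) ℝ // A.IsSymm},
    ((dotProduct x p.1 + (M * (p.2 : Matrix (Fin d) (Fin d) ℝ)).trace : ℝ) : EReal)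
      - Lam d ρ p.1 p.2

end

/-! Since `T_n` is positive definite on `D_n^+`, the Hamiltonian is nonnegative there and
`Z_n ≥ P(D_n^+)`. Adding a vector keeps `T_n` positive definite, so `P(D_n^+)` increases with `n`,
and `P(D_d^+) > 0` because `E[det T_d] = d! det Σ > 0` (expand `det T_d = (det [x_1 … x_d])²`
by Leibniz and integrate the independent factors). Hence `(1/n) ln Z_n ≥ (1/n) ln P(D_d^+) → 0`. -/

open Topology

section Gram

variable {d n : ℕ}

lemma Tmat_eq_transpose_mul (x : Fin n → Fin d → ℝ) : Tmat d n x = (of x)ᵀ * of x := by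
  ext k l
  simp [Tmat, mul_apply, vecMulVec_apply, Matrix.sum_apply]

lemma posSemidef_Tmat (x : Fin n → Fin d → ℝ) : (Tmat d n x).PosSemidef := by
  simpa [Tmat_eq_transpose_mul, conjTranspose_eq_transpose_of_trivial] using
    posSemidef_conjTranspose_mul_self (of x)

lemma posDef_Tmat_of_det_pos {x : Fin n → Fin d → ℝ} (h : 0 < (Tmat d n x).det) :
    (Tmat d n x).PosDef :=
  (posSemidef_Tmat x).posDef_iff_isUnit.2 <|
    (isUnit_iff_isUnit_det _).2 (isUnit_iff_ne_zero.2 h.ne')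

lemma Tmat_succ (x : Fin (n + 1) → Fin d → ℝ) :
    Tmat d (n + 1) x = Tmat d n (Fin.init x) + vecMulVec (x (Fin.last n)) (x (Fin.last n)) :=
  Fin.sum_univ_castSucc _

lemma det_Tmat_succ_pos {x : Fin (n + 1) → Fin d → ℝ} (h : 0 < (Tmat d n (Fin.init x)).det) :
    0 < (Tmat d (n + 1) x).det := by
  rw [Tmat_succ]
  exact ((posDef_Tmat_of_det_pos h).add_posSemidef (posSemidef_vecMulVec_self_star _)).det_pos

lemma measurableSet_det_Tmat_pos :
    MeasurableSet {x : Fin n → Fin d → ℝ | 0 < (Tmat d n x).det} := by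
  have : Continuous fun x : Fin n → Fin d → ℝ => (Tmat d n x).det := by
    simp only [Tmat_eq_transpose_mul]
    fun_prop
  exact measurableSet_lt measurable_const this.measurable

lemma Hfun_nonneg_of_det_pos {x : Fin n → Fin d → ℝ} (h : 0 < (Tmat d n x).det) :
    0 ≤ Hfun d n x := by
  have := (posDef_Tmat_of_det_pos h).inv.posSemidef.dotProduct_mulVec_nonneg (Svec d n x)
  rw [star_trivial, dotProduct_comm] at this
  exact mul_nonneg (by norm_num) this

end Gram

lemma sum_perm_sign_mul_prod_eq_det {ι R : Type*} [Fintype ι] [DecidableEq ι] [CommRing R]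
    (A : Matrix ι ι R) (σ : Equiv.Perm ι) :
    ∑ τ : Equiv.Perm ι, ((σ.sign : ℤ) * (τ.sign : ℤ) : R) * ∏ i, A (σ i) (τ i) = A.det := by
  have hrow : ∑ τ : Equiv.Perm ι, (τ.sign : R) * ∏ i, A (σ i) (τ i) = σ.sign * A.det := by
    rw [← det_permute, ← det_transpose, det_apply']
    rfl
  simp_rw [mul_assoc, ← Finset.mul_sum, hrow, ← mul_assoc, ← Int.cast_mul, ← Units.val_mul,
    Int.units_mul_self, Units.val_one, Int.cast_one, one_mul]

lemma det_Tmat_self_eq_sum_perm {d : ℕ} (x : Fin d → Fin d → ℝ) :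
    (Tmat d d x).det = ∑ σ : Equiv.Perm (Fin d), ∑ τ : Equiv.Perm (Fin d),
      ((σ.sign : ℤ) * (τ.sign : ℤ) : ℝ) * ∏ i, x i (σ i) * x i (τ i) := by
  have hx : (of x).det = ∑ σ : Equiv.Perm (Fin d), (σ.sign : ℝ) * ∏ i, x i (σ i) := by
    rw [← det_transpose, det_apply']
    rfl
  rw [Tmat_eq_transpose_mul, det_mul, det_transpose, hx, Finset.sum_mul_sum]
  refine Finset.sum_congr rfl fun σ _ => Finset.sum_congr rfl fun τ _ => ?_
  rw [Finset.prod_mul_distrib]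
  ring

section Moments

variable {d : ℕ} {ρ : Measure (Fin d → ℝ)}

lemma integrable_mul_of_posDef_covM (hcov : (covM d ρ).PosDef) (i j : Fin d) :
    Integrable (fun z : Fin d → ℝ => z i * z j) ρ := by
  have hsq (k : Fin d) : Integrable (fun z : Fin d → ℝ => z k * z k) ρ := by
    -- otherwise `Σ_kk = ∫ z_k²` would be the junk value `0`
    by_contra h
    simpa [covM, integral_undef h] using hcov.diag_pos (i := k)
  refine ((hsq i).add (hsq j)).mono' (by fun_prop) (ae_of_all _ fun z => ?_)
  rw [Real.norm_eq_abs, Pi.add_apply, abs_le]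
  constructor <;> nlinarith [sq_nonneg (z i + z j), sq_nonneg (z i - z j)]

lemma integral_det_Tmat_self [SigmaFinite ρ]
    (hint : ∀ i j, Integrable (fun z : Fin d → ℝ => z i * z j) ρ) :
    ∫ x, (Tmat d d x).det ∂(Measure.pi fun _ => ρ) = d.factorial * (covM d ρ).det := by
  have hprod (σ τ : Equiv.Perm (Fin d)) :
      Integrable (fun x : Fin d → Fin d → ℝ => ∏ i, x i (σ i) * x i (τ i))
        (Measure.pi fun _ => ρ) :=
    Integrable.fintype_prod_dep (f := fun i (z : Fin d → ℝ) => z (σ i) * z (τ i))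
      fun i => hint _ _
  have hmoment (σ τ : Equiv.Perm (Fin d)) :
      ∫ x, ∏ i, x i (σ i) * x i (τ i) ∂(Measure.pi fun _ => ρ)
        = ∏ i, covM d ρ (σ i) (τ i) :=
    integral_fintype_prod_eq_prod (fun i (z : Fin d → ℝ) => z (σ i) * z (τ i))
  simp_rw [det_Tmat_self_eq_sum_perm]
  rw [integral_finsetSum _ fun σ _ => integrable_finsetSum _ fun τ _ => (hprod σ τ).const_mul _]
  simp_rw [integral_finsetSum _ fun τ _ => (hprod _ τ).const_mul _, integral_const_mul, hmoment,
    sum_perm_sign_mul_prod_eq_det, Finset.sum_const, Finset.card_univ, Fintype.card_perm,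
    Fintype.card_fin, nsmul_eq_mul]

end Moments

lemma MeasureTheory.Measure.pi_setOf_init_mem {α : Type*} [MeasurableSpace α] (μ : Measure α)
    [IsProbabilityMeasure μ] {n : ℕ} {s : Set (Fin n → α)} (hs : MeasurableSet s) :
    Measure.pi (fun _ : Fin (n + 1) => μ) {x | Fin.init x ∈ s} = Measure.pi (fun _ => μ) s := by
  have hpre : {x : Fin (n + 1) → α | Fin.init x ∈ s}
      = MeasurableEquiv.piFinSuccAbove (fun _ => α) (Fin.last n) ⁻¹' (Set.univ ×ˢ s) := by
    ext x
    simp [MeasurableEquiv.piFinSuccAbove_apply]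
  rw [hpre, (measurePreserving_piFinSuccAbove (fun _ => μ) (Fin.last n)).measure_preimage
    (MeasurableSet.univ.prod hs).nullMeasurableSet, Measure.prod_prod, measure_univ, one_mul]

section Nondegeneracy

variable {d : ℕ} {ρ : Measure (Fin d → ℝ)} [IsProbabilityMeasure ρ]

noncomputable def probDetTmatPos (d : ℕ) (ρ : Measure (Fin d → ℝ)) (n : ℕ) : ℝ :=
  (Measure.pi fun _ : Fin n => ρ).real {x | 0 < (Tmat d n x).det}

lemma probDetTmatPos_mono : Monotone (probDetTmatPos d ρ) := by
  refine monotone_nat_of_le_succ fun n => ?_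
  rw [probDetTmatPos, probDetTmatPos, measureReal_def,
    ← Measure.pi_setOf_init_mem ρ measurableSet_det_Tmat_pos]
  exact ENNReal.toReal_mono (measure_ne_top _ _) (measure_mono fun x => det_Tmat_succ_pos)

lemma probDetTmatPos_self_pos (hcov : (covM d ρ).PosDef) : 0 < probDetTmatPos d ρ d := by
  refine ENNReal.toReal_pos (fun hzero => ?_) (measure_ne_top _ _)
  have hdet : ∀ᵐ x ∂(Measure.pi fun _ : Fin d => ρ), (Tmat d d x).det = 0 := by
    filter_upwards [measure_eq_zero_iff_ae_notMem.1 hzero] with x hx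
    exact le_antisymm (not_lt.1 hx) (posSemidef_Tmat x).det_nonneg
  have := integral_det_Tmat_self (integrable_mul_of_posDef_covM hcov)
  rw [integral_eq_zero_of_ae hdet] at this
  exact (mul_pos (Nat.cast_pos.2 d.factorial_pos) hcov.det_pos).ne' this.symm

lemma log_probDetTmatPos_le_log_Zconst {n : ℕ} (hpos : 0 < probDetTmatPos d ρ n) :
    Real.log (probDetTmatPos d ρ n) ≤ Real.log (Zconst d ρ n) := by
  by_cases hint : Integrable (fun x => Set.indicator {x | 0 < (Tmat d n x).det}
      (fun x => Real.exp (Hfun d n x)) x) (Measure.pi fun _ : Fin n => ρ)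
  · refine Real.log_le_log hpos ?_
    rw [probDetTmatPos, ← integral_indicator_one measurableSet_det_Tmat_pos]
    refine integral_mono ((integrable_const 1).indicator measurableSet_det_Tmat_pos) hint
      fun x => Set.indicator_le_indicator' fun hx => Real.one_le_exp (Hfun_nonneg_of_det_pos hx)
  · -- a non-integrable `Z_n` is `0` by convention, and `log 0 = 0 ≥ log (probability)`
    rw [Zconst, integral_undef hint, Real.log_zero]
    exact Real.log_nonpos hpos.le measureReal_le_one

end Nondegeneracy

theorem liminf_log_Zconst_nonneg_general
    (d : ℕ) (ρ : Measure (Fin d → ℝ)) [IsProbabilityMeasure ρ]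
    (hcov : (covM d ρ).PosDef) :
    ∀ c < (0:ℝ), ∀ᶠ n : ℕ in atTop, c ≤ Real.log (Zconst d ρ n) / n := by
  intro c hc
  have hpos := probDetTmatPos_self_pos hcov
  have hlim : Tendsto (fun n : ℕ => Real.log (probDetTmatPos d ρ d) / n) atTop (𝓝 0) :=
    tendsto_const_div_atTop_nhds_zero_nat _
  filter_upwards [eventually_ge_atTop d, (tendsto_order.1 hlim).1 c hc] with n hdn hcn
  have hmono := probDetTmatPos_mono (ρ := ρ) hdn
  calc c ≤ Real.log (probDetTmatPos d ρ d) / n := hcn.le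
    _ ≤ Real.log (Zconst d ρ n) / n :=
      div_le_div_of_nonneg_right ((Real.log_le_log hpos hmono).trans
        (log_probDetTmatPos_le_log_Zconst (hpos.trans_le hmono))) n.cast_nonneg

/-- `liminf (1/n) ln Z_n ≥ 0`. -/
theorem liminf_log_Zconst_nonneg
    (d : ℕ) (hd : 1 ≤ d) (ρ : Measure (Fin d → ℝ)) [IsProbabilityMeasure ρ]
    (hsym : SymMeas d ρ) (hstar : CondStar d ρ) (hcov : (covM d ρ).PosDef) :
    ∀ c < (0:ℝ), ∀ᶠ n : ℕ in atTop, c ≤ Real.log (Zconst d ρ n) / n :=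
  liminf_log_Zconst_nonneg_general d ρ hcov
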